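/- Let J(θ) = Σᵢ F(θᵢ) with F a weakly convex sparsity inducing function with nonconvexity parameter ζ > 0 (so H(t)=F(t)+ζt² is convex), and let l be the empirical logistic loss for data matrix X ∈ ℝ^{d×N} and binary labels. If X does not have full row rank (i.e., the column space of X has dimension less than d), then the objective θ ↦ l(θ) + βJ(θ) is not convex on ℝ^d, for any β > 0. -/

import Mathlib

open scoped RealInnerProductSpace BigOperators

noncomputable def logisticLoss {d N : ℕ} (x : Fin N → EuclideanSpace ℝ (Fin d))
    (y : Fin N → ℝ) (θ : EuclideanSpace ℝ (Fin d)) : ℝ :=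
  ∑ i, (Real.log (1 + Real.exp ⟪θ, x i⟫) - y i * ⟪θ, x i⟫)

/-!
Along a direction `u ≠ 0` orthogonal to every sample the logistic loss is constant, so convexity
of the objective forces `r ↦ ∑ⱼ F (r uⱼ)` to be convex. Since `F t / t` is nonincreasing, `F` is
star-shaped, `a F t ≤ F (a t)` for `a ∈ [0, 1]`; convexity of the sum through `0` gives the reverse
inequality for the sum, hence equality in every term. So `F` is positively homogeneous,
`F t = F 1 * |t|`, and then `F + (ζ / 2) t²` is already convex, contradicting the minimality of `ζ`.
-/

open Set

section StarShaped

variable {F : ℝ → ℝ}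

lemma mul_le_apply_mul_of_antitoneOn_div (hratio : AntitoneOn (fun t => F t / t) (Ioi 0))
    {t a : ℝ} (ht : 0 < t) (ha : 0 < a) (ha1 : a ≤ 1) : a * F t ≤ F (a * t) := by
  have hat : 0 < a * t := mul_pos ha ht
  have h : F t / t ≤ F (a * t) / (a * t) :=
    hratio (mem_Ioi.mpr hat) (mem_Ioi.mpr ht) (mul_le_of_le_one_left ht.le ha1)
  calc a * F t = a * t * (F t / t) := by field_simp
    _ ≤ a * t * (F (a * t) / (a * t)) := mul_le_mul_of_nonneg_left h hat.le
    _ = F (a * t) := by field_simp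

lemma mul_le_apply_mul_of_even (heven : ∀ t, F (-t) = F t) (h0 : F 0 = 0)
    (hratio : AntitoneOn (fun t => F t / t) (Ioi 0))
    (t : ℝ) {a : ℝ} (ha : 0 ≤ a) (ha1 : a ≤ 1) : a * F t ≤ F (a * t) := by
  rcases ha.eq_or_lt with rfl | ha
  · simp [h0]
  rcases lt_trichotomy t 0 with ht | rfl | ht
  · have h := mul_le_apply_mul_of_antitoneOn_div hratio (neg_pos.mpr ht) ha ha1
    rwa [heven, mul_neg, heven] at h
  · simp [h0]
  · exact mul_le_apply_mul_of_antitoneOn_div hratio ht ha ha1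

lemma apply_eq_mul_abs_of_homogeneous (heven : ∀ t, F (-t) = F t)
    (hhom : ∀ t a, 0 ≤ a → a ≤ 1 → F (a * t) = a * F t) (t : ℝ) : F t = F 1 * |t| := by
  have hlin : ∀ s, 0 ≤ s → F s = F 1 * s := by
    intro s hs
    rcases le_or_gt s 1 with hs1 | hs1
    · simpa [mul_comm] using hhom 1 s hs hs1
    · have h := hhom s s⁻¹ (inv_nonneg.mpr hs) (inv_le_one_of_one_le₀ hs1.le)
      rw [inv_mul_cancel₀ (by positivity)] at h
      rw [h, inv_mul_eq_div, div_mul_cancel₀ _ (by positivity)]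
  rcases abs_choice t with h | h
  · rw [← hlin |t| (abs_nonneg t), h]
  · rw [← hlin |t| (abs_nonneg t), h, heven]

lemma homogeneous_of_convexOn_sum_apply_mul {ι : Type*} [Fintype ι] {u : ι → ℝ} {j₀ : ι}
    (hj₀ : u j₀ ≠ 0) (h0 : F 0 = 0) (hstar : ∀ t a, 0 ≤ a → a ≤ 1 → a * F t ≤ F (a * t))
    (hconv : ConvexOn ℝ univ (fun r => ∑ j, F (r * u j)))
    (t a : ℝ) (ha : 0 ≤ a) (ha1 : a ≤ 1) : F (a * t) = a * F t := by
  set s := t / u j₀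
  have hsum : ∑ j, F (a * (s * u j)) ≤ ∑ j, a * F (s * u j) := by
    have h := hconv.2 (mem_univ s) (mem_univ 0) ha (sub_nonneg.mpr ha1) (add_sub_cancel a 1)
    simpa [h0, mul_assoc, Finset.mul_sum] using h
  have hle : ∀ j ∈ Finset.univ, a * F (s * u j) ≤ F (a * (s * u j)) :=
    fun j _ => hstar _ a ha ha1
  have heq := (Finset.sum_eq_sum_iff_of_le hle).mp (le_antisymm (Finset.sum_le_sum hle) hsum)
  have hs : s * u j₀ = t := div_mul_cancel₀ t hj₀
  rw [← hs]
  exact (heq j₀ (Finset.mem_univ j₀)).symm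

end StarShaped

lemma convexOn_mul_abs_add_mul_sq {c k : ℝ} (hc : 0 ≤ c) (hk : 0 ≤ k) :
    ConvexOn ℝ univ (fun t : ℝ => c * |t| + k * t ^ 2) := by
  have habs := (convexOn_univ_norm (E := ℝ)).smul hc
  have hsq := (Even.convexOn_pow (𝕜 := ℝ) even_two).smul hk
  exact (habs.add hsq).congr fun t _ => by simp [Real.norm_eq_abs]

lemma logisticLoss_smul_of_inner_eq_zero {d N : ℕ} {x : Fin N → EuclideanSpace ℝ (Fin d)}
    (y : Fin N → ℝ) {u : EuclideanSpace ℝ (Fin d)} (hu : ∀ i, ⟪u, x i⟫ = 0) (r : ℝ) :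
    logisticLoss x y (r • u) = logisticLoss x y 0 := by
  simp [logisticLoss, real_inner_smul_left, hu]

lemma convexOn_sum_apply_mul_of_inner_eq_zero {d N : ℕ} {x : Fin N → EuclideanSpace ℝ (Fin d)}
    {y : Fin N → ℝ} {F : ℝ → ℝ} {β : ℝ} (hβ : 0 < β)
    {u : EuclideanSpace ℝ (Fin d)} (hu : ∀ i, ⟪u, x i⟫ = 0)
    (hconv : ConvexOn ℝ univ (fun θ => logisticLoss x y θ + β * ∑ j, F (θ j))) :
    ConvexOn ℝ univ (fun r : ℝ => ∑ j, F (r * u j)) := by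
  have hline := ((hconv.comp_linearMap (LinearMap.toSpanSingleton ℝ _ u)).add_const
    (-logisticLoss x y 0)).smul (inv_nonneg.mpr hβ.le)
  refine hline.congr fun r _ => ?_
  simp [logisticLoss_smul_of_inner_eq_zero y hu, hβ.ne']

theorem weaklyConvex_logistic_nonconvex_general {d N : ℕ}
    (x : Fin N → EuclideanSpace ℝ (Fin d)) (y : Fin N → ℝ)
    (F : ℝ → ℝ) (ζ : ℝ) (hζ : 0 < ζ)
    (hnonneg : ∀ t, 0 ≤ F t)
    (heven : ∀ t, F (-t) = F t)
    (h0 : F 0 = 0)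
    (hratio : AntitoneOn (fun t => F t / t) (Set.Ioi 0))
    (hζmin : ∀ ζ' : ℝ, 0 < ζ' → ConvexOn ℝ Set.univ (fun t => F t + ζ' * t ^ 2) → ζ ≤ ζ')
    (hrank : ∃ u : EuclideanSpace ℝ (Fin d), u ≠ 0 ∧ ∀ i, ⟪u, x i⟫ = 0)
    (β : ℝ) (hβ : 0 < β) :
    ¬ ConvexOn ℝ Set.univ (fun θ => logisticLoss x y θ + β * ∑ j, F (θ j)) := by
  intro hconv
  obtain ⟨u, hu0, hux⟩ := hrank
  obtain ⟨j₀, hj₀⟩ : ∃ j, u j ≠ 0 := by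
    by_contra! h
    exact hu0 (by ext j; exact h j)
  have hhom := homogeneous_of_convexOn_sum_apply_mul hj₀ h0
    (fun t _ => mul_le_apply_mul_of_even heven h0 hratio t)
    (convexOn_sum_apply_mul_of_inner_eq_zero hβ hux hconv)
  have hhalf : ConvexOn ℝ univ (fun t => F t + ζ / 2 * t ^ 2) :=
    (convexOn_mul_abs_add_mul_sq (hnonneg 1) (half_pos hζ).le).congr fun t _ => by
      rw [apply_eq_mul_abs_of_homogeneous heven hhom t]
  linarith [hζmin (ζ / 2) (half_pos hζ) hhalf]

theorem weaklyConvex_logistic_nonconvex {d N : ℕ}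
    (x : Fin N → EuclideanSpace ℝ (Fin d)) (y : Fin N → ℝ)
    (hy : ∀ i, y i = 0 ∨ y i = 1)
    (F : ℝ → ℝ) (ζ : ℝ) (hζ : 0 < ζ)
    (hnonneg : ∀ t, 0 ≤ F t)
    (heven : ∀ t, F (-t) = F t)
    (h0 : F 0 = 0)
    (hnontriv : ∃ t, F t ≠ 0)
    (hmono : MonotoneOn F (Set.Ici 0))
    (hratio : AntitoneOn (fun t => F t / t) (Set.Ioi 0))
    (hH : ConvexOn ℝ Set.univ (fun t => F t + ζ * t ^ 2))
    (hζmin : ∀ ζ' : ℝ, 0 < ζ' → ConvexOn ℝ Set.univ (fun t => F t + ζ' * t ^ 2) → ζ ≤ ζ')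
    (hrank : ∃ u : EuclideanSpace ℝ (Fin d), u ≠ 0 ∧ ∀ i, ⟪u, x i⟫ = 0)
    (β : ℝ) (hβ : 0 < β) :
    ¬ ConvexOn ℝ Set.univ (fun θ => logisticLoss x y θ + β * ∑ j, F (θ j)) :=
  weaklyConvex_logistic_nonconvex_general x y F ζ hζ hnonneg heven h0 hratio hζmin hrank β hβ
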